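/- arXiv:1802.10057 — 6 statements merged into one kernel-verified Lean document; each statement's English description precedes it below -/
import Mathlib

section
/- Let K be a compact smooth manifold without boundary, X a vector field on K (assigning to each p ∈ K a tangent vector X_p), α : K → ℝ a continuous nowhere-vanishing function, and u : K → ℝ a C¹ function. If du_p(X_p) + α(p)·u(p) = 0 for every p ∈ K, then u is identically zero. -/
/-!
At a maximum or minimum point `q` of `u` the differential `du_q` vanishes, so the equation reduces
to `α q * u q = 0` and hence `u q = 0`. Thus `max u = min u = 0`.
-/

open Manifold Set

theorem IsLocalExtr.mfderiv_eq_zero {E : Type*} [NormedAddCommGroup E] [NormedSpace ℝ E]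
    {H : Type*} [TopologicalSpace H] {I : ModelWithCorners ℝ E H}
    {M : Type*} [TopologicalSpace M] [ChartedSpace H M] {f : M → ℝ} {x : M}
    (hx : I.IsInteriorPoint x) (hf : IsLocalExtr f x) :
    mfderiv I 𝓘(ℝ, ℝ) f x = 0 := by
  by_cases hdiff : MDifferentiableAt I 𝓘(ℝ, ℝ) f x
  · have hchart : IsLocalExtr (writtenInExtChartAt I 𝓘(ℝ, ℝ) x f) (extChartAt I x x) := by
      rw [writtenInExtChartAt, extChartAt_model_space_eq_id, PartialEquiv.refl_coe,
        Function.id_comp]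
      refine IsLocalExtr.comp_continuous ?_ (continuousAt_extChartAt_symm x)
      rwa [extChartAt_to_inv]
    -- at an interior point the chart image of a neighbourhood fills a neighbourhood in `E`
    rw [hdiff.mfderiv, fderivWithin_of_mem_nhds (range_mem_nhds_isInteriorPoint hx),
      hchart.fderiv_eq_zero]
    rfl
  · exact mfderiv_zero_of_not_mdifferentiableAt hdiff

theorem stmt6_general {E : Type*} [NormedAddCommGroup E] [NormedSpace ℝ E]
    {H : Type*} [TopologicalSpace H] {I : ModelWithCorners ℝ E H}
    {K : Type*} [TopologicalSpace K] [ChartedSpace H K]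
    [CompactSpace K] [BoundarylessManifold I K]
    (X : ∀ p : K, TangentSpace I p)
    (α : K → ℝ) (hα0 : ∀ p : K, α p ≠ 0)
    (u : K → ℝ) (hu : ContMDiff I 𝓘(ℝ, ℝ) 1 u)
    (heq : ∀ p : K, (show ℝ from mfderiv I 𝓘(ℝ, ℝ) u p (X p)) + α p * u p = 0) :
    ∀ p : K, u p = 0 := by
  intro p
  have vanish_of_isLocalExtr : ∀ q, IsLocalExtr u q → u q = 0 := fun q hq => by
    have h := heq q
    rw [hq.mfderiv_eq_zero BoundarylessManifold.isInteriorPoint] at h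
    exact (mul_eq_zero.1 (zero_add (α q * u q) ▸ h)).resolve_left (hα0 q)
  obtain ⟨pmax, -, hmax⟩ :=
    isCompact_univ.exists_isMaxOn ⟨p, mem_univ p⟩ hu.continuous.continuousOn
  obtain ⟨pmin, -, hmin⟩ :=
    isCompact_univ.exists_isMinOn ⟨p, mem_univ p⟩ hu.continuous.continuousOn
  have hmax0 := vanish_of_isLocalExtr pmax (hmax.isLocalMax Filter.univ_mem).isExtr
  have hmin0 := vanish_of_isLocalExtr pmin (hmin.isLocalMin Filter.univ_mem).isExtr
  have hle : u p ≤ u pmax := hmax (mem_univ p)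
  have hge : u pmin ≤ u p := hmin (mem_univ p)
  linarith

/-- Injectivity part of Lemma 6.2: on a compact boundaryless manifold, if
`∂_X u + α·u = 0` with `α` continuous and nowhere vanishing, then `u ≡ 0`. -/
theorem stmt6 {E : Type*} [NormedAddCommGroup E] [NormedSpace ℝ E] [FiniteDimensional ℝ E]
    {H : Type*} [TopologicalSpace H] {I : ModelWithCorners ℝ E H}
    {K : Type*} [TopologicalSpace K] [ChartedSpace H K] [IsManifold I (⊤ : ℕ∞) K]
    [CompactSpace K] [BoundarylessManifold I K]
    (X : ∀ p : K, TangentSpace I p)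
    (α : K → ℝ) (hα : Continuous α) (hα0 : ∀ p : K, α p ≠ 0)
    (u : K → ℝ) (hu : ContMDiff I 𝓘(ℝ, ℝ) 1 u)
    (heq : ∀ p : K, (show ℝ from mfderiv I 𝓘(ℝ, ℝ) u p (X p)) + α p * u p = 0) :
    ∀ p : K, u p = 0 :=
  stmt6_general X α hα0 u hu heq
end

section
/- Let n ≥ 1, v ∈ ℝⁿ, let α : ℝⁿ → ℝ be continuous, ℤⁿ-periodic, and nowhere vanishing, and let f : ℝⁿ → ℝ be arbitrary. If u₁, u₂ : ℝⁿ → ℝ are C¹, ℤⁿ-periodic, and satisfy Du_i(x)(v) + α(x)·u_i(x) = f(x) for all x ∈ ℝⁿ and i = 1, 2, then u₁ = u₂. -/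
/-!
The difference `w = u₁ - u₂` is continuous, `ℤⁿ`-periodic and solves `∂_v w + α w = 0`.
By periodicity `w` takes all its values on the compact unit cube, so it attains a global
maximum and a global minimum. At either extremum `Dw = 0`, hence `α w = 0` there, and as
`α` never vanishes both the maximum and the minimum of `w` are `0`.
-/

/-- `ℤⁿ`-periodicity: the function descends to the flat torus `ℝⁿ/ℤⁿ`. -/
def ZPeriodic {n : ℕ} (g : (Fin n → ℝ) → ℝ) : Prop :=
  ∀ (x : Fin n → ℝ) (k : Fin n → ℤ), g (x + fun i => (k i : ℝ)) = g x

open Set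

namespace ZPeriodic

variable {n : ℕ} {g h : (Fin n → ℝ) → ℝ}

theorem sub (hg : ZPeriodic g) (hh : ZPeriodic h) : ZPeriodic (g - h) := fun x k => by
  simp only [Pi.sub_apply, hg x k, hh x k]

theorem neg (hg : ZPeriodic g) : ZPeriodic (-g) := fun x k => by
  simp only [Pi.neg_apply, hg x k]

theorem exists_mem_Icc_eq (hg : ZPeriodic g) (x : Fin n → ℝ) :
    ∃ y ∈ Icc (0 : Fin n → ℝ) 1, g y = g x := by
  refine ⟨fun i => Int.fract (x i),
    ⟨fun i => Int.fract_nonneg _, fun i => (Int.fract_lt_one _).le⟩, ?_⟩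
  have hx : ((fun i => Int.fract (x i)) + fun i => ((⌊x i⌋ : ℤ) : ℝ)) = x := by
    funext i
    exact Int.fract_add_floor (x i)
  rw [← hg _ fun i => ⌊x i⌋, hx]

theorem exists_forall_le (hg : ZPeriodic g) (hc : Continuous g) :
    ∃ x₀, ∀ x, g x₀ ≤ g x := by
  obtain ⟨x₀, -, hx₀⟩ :=
    isCompact_Icc.exists_isMinOn (nonempty_Icc.2 zero_le_one) hc.continuousOn
  refine ⟨x₀, fun x => ?_⟩
  obtain ⟨y, hy, hyx⟩ := hg.exists_mem_Icc_eq x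
  exact hyx ▸ hx₀ hy

theorem exists_forall_ge (hg : ZPeriodic g) (hc : Continuous g) :
    ∃ x₀, ∀ x, g x ≤ g x₀ := by
  obtain ⟨x₀, hx₀⟩ := hg.neg.exists_forall_le hc.neg
  exact ⟨x₀, fun x => neg_le_neg_iff.1 (hx₀ x)⟩

end ZPeriodic

theorem IsLocalExtr.eq_zero_of_fderiv_add_mul_eq_zero {E : Type*} [NormedAddCommGroup E]
    [NormedSpace ℝ E] {w : E → ℝ} {x v : E} {a : ℝ} (hx : IsLocalExtr w x) (ha : a ≠ 0)
    (hw : fderiv ℝ w x v + a * w x = 0) : w x = 0 := by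
  rw [hx.fderiv_eq_zero, zero_apply, zero_add] at hw
  exact (mul_eq_zero.1 hw).resolve_left ha

theorem ZPeriodic.eq_zero_of_fderiv_add_mul_eq_zero {n : ℕ} {w α : (Fin n → ℝ) → ℝ}
    {v : Fin n → ℝ} (hwp : ZPeriodic w) (hwc : Continuous w) (hα0 : ∀ x, α x ≠ 0)
    (hw : ∀ x, fderiv ℝ w x v + α x * w x = 0) : w = 0 := by
  obtain ⟨xmin, hmin⟩ := hwp.exists_forall_le hwc
  obtain ⟨xmax, hmax⟩ := hwp.exists_forall_ge hwc
  have hmin0 : w xmin = 0 := IsLocalExtr.eq_zero_of_fderiv_add_mul_eq_zero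
    (Or.inl (Filter.Eventually.of_forall hmin)) (hα0 xmin) (hw xmin)
  have hmax0 : w xmax = 0 := IsLocalExtr.eq_zero_of_fderiv_add_mul_eq_zero
    (Or.inr (Filter.Eventually.of_forall hmax)) (hα0 xmax) (hw xmax)
  funext x
  exact le_antisymm ((hmax x).trans hmax0.le) (hmin0.ge.trans (hmin x))

theorem stmt9_general (n : ℕ) (v : Fin n → ℝ)
    (α : (Fin n → ℝ) → ℝ)
    (hα0 : ∀ x, α x ≠ 0)
    (f : (Fin n → ℝ) → ℝ)
    (u₁ u₂ : (Fin n → ℝ) → ℝ)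
    (hu₁ : ContDiff ℝ 1 u₁) (hu₁p : ZPeriodic u₁)
    (hu₂ : ContDiff ℝ 1 u₂) (hu₂p : ZPeriodic u₂)
    (heq₁ : ∀ x, fderiv ℝ u₁ x v + α x * u₁ x = f x)
    (heq₂ : ∀ x, fderiv ℝ u₂ x v + α x * u₂ x = f x) :
    u₁ = u₂ := by
  have hdiff : ∀ x, fderiv ℝ (u₁ - u₂) x v + α x * (u₁ - u₂) x = 0 := fun x => by
    rw [fderiv_sub (hu₁.differentiable one_ne_zero x) (hu₂.differentiable one_ne_zero x),
      sub_apply, Pi.sub_apply]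
    linear_combination heq₁ x - heq₂ x
  exact sub_eq_zero.1 <| (hu₁p.sub hu₂p).eq_zero_of_fderiv_add_mul_eq_zero
    (hu₁.continuous.sub hu₂.continuous) hα0 hdiff

/-- Uniqueness part of Lemma 6.2 on the flat torus: two `C¹` periodic solutions
of `∂_v u + α u = f` with `α` continuous, periodic and nowhere vanishing agree. -/
theorem stmt9 (n : ℕ) (hn : 1 ≤ n) (v : Fin n → ℝ)
    (α : (Fin n → ℝ) → ℝ) (hα : Continuous α) (hαp : ZPeriodic α)
    (hα0 : ∀ x, α x ≠ 0)
    (f : (Fin n → ℝ) → ℝ)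
    (u₁ u₂ : (Fin n → ℝ) → ℝ)
    (hu₁ : ContDiff ℝ 1 u₁) (hu₁p : ZPeriodic u₁)
    (hu₂ : ContDiff ℝ 1 u₂) (hu₂p : ZPeriodic u₂)
    (heq₁ : ∀ x, fderiv ℝ u₁ x v + α x * u₁ x = f x)
    (heq₂ : ∀ x, fderiv ℝ u₂ x v + α x * u₂ x = f x) :
    u₁ = u₂ :=
  stmt9_general n v α hα0 f u₁ u₂ hu₁ hu₁p hu₂ hu₂p heq₁ heq₂
end

section
/- Let T > 0, D ≥ 0, M ≥ 0, C₀ ≥ 0, and let A_k : (0,T] → ℝ for k ∈ ℕ be continuous nonnegative functions such that A₀(t) ≤ C₀·t^D for all t ∈ (0,T], and for every k ≥ 1 and every t ∈ (0,T] the function s ↦ A_{k−1}(s)·s^{−D−1/2} is integrable on (0,t) and A_k(t) ≤ M·t^D·∫_0^t A_{k−1}(s)·s^{−D−1/2} ds. Then A_k(t) ≤ C₀·t^D·(2M√t)^k / k! for every k ∈ ℕ and every t ∈ (0,T]. In particular Σ_k sup_{(0,T]} A_k < ∞. -/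
open MeasureTheory

/-- Iterated-integral estimate with factorial decay (key step in the Picard
iteration for the semi-linear characteristic Cauchy problem, Theorem 1.9). -/
theorem stmt11 (T D M C₀ : ℝ) (hT : 0 < T) (hD : 0 ≤ D) (hM : 0 ≤ M) (hC₀ : 0 ≤ C₀)
    (A : ℕ → ℝ → ℝ)
    (hcont : ∀ k : ℕ, ContinuousOn (A k) (Set.Ioc 0 T))
    (hnonneg : ∀ k : ℕ, ∀ t ∈ Set.Ioc (0:ℝ) T, 0 ≤ A k t)
    (h0 : ∀ t ∈ Set.Ioc (0:ℝ) T, A 0 t ≤ C₀ * t ^ D)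
    (hint : ∀ k : ℕ, ∀ t ∈ Set.Ioc (0:ℝ) T,
      IntegrableOn (fun s => A k s * s ^ (-D - 1/2)) (Set.Ioc 0 t))
    (hrec : ∀ k : ℕ, ∀ t ∈ Set.Ioc (0:ℝ) T,
      A (k + 1) t ≤ M * t ^ D * ∫ s in Set.Ioc (0:ℝ) t, A k s * s ^ (-D - 1/2)) :
    (∀ k : ℕ, ∀ t ∈ Set.Ioc (0:ℝ) T,
      A k t ≤ C₀ * t ^ D * (2 * M * Real.sqrt t) ^ k / (Nat.factorial k)) ∧
    Summable (fun k : ℕ => ⨆ t : Set.Ioc (0:ℝ) T, A k t) := by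
  have key : ∀ k : ℕ, ∀ t ∈ Set.Ioc (0:ℝ) T,
      A k t ≤ C₀ * t ^ D * (2 * M * Real.sqrt t) ^ k / (Nat.factorial k) := by
    intro k
    induction k with
    | zero =>
      intro t ht
      simpa using h0 t ht
    | succ k ih =>
      intro t ht
      obtain ⟨ht0, htT⟩ := ht
      set r : ℝ := ((k : ℝ) - 1) / 2 with hr
      have hr1 : (-1 : ℝ) < r := by
        have : (0:ℝ) ≤ (k:ℝ) := Nat.cast_nonneg k
        rw [hr]; linarith
      -- pointwise bound on Ioc 0 t
      have hpt : ∀ s ∈ Set.Ioc (0:ℝ) t,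
          A k s * s ^ (-D - 1/2) ≤ C₀ * (2*M)^k / (Nat.factorial k) * s ^ r := by
        intro s hs
        obtain ⟨hs0, hst⟩ := hs
        have hsT : s ∈ Set.Ioc (0:ℝ) T := ⟨hs0, hst.trans htT⟩
        have h1 : A k s * s ^ (-D - 1/2)
            ≤ (C₀ * s ^ D * (2 * M * Real.sqrt s) ^ k / (Nat.factorial k)) * s ^ (-D - 1/2) := by
          apply mul_le_mul_of_nonneg_right (ih s hsT)
          exact Real.rpow_nonneg hs0.le _
        refine h1.trans (le_of_eq ?_)
        have hsq : Real.sqrt s = s ^ (1/2 : ℝ) := Real.sqrt_eq_rpow s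
        have hpow : (Real.sqrt s) ^ k = s ^ ((k : ℝ)/2) := by
          rw [hsq, ← Real.rpow_natCast (s ^ (1/2:ℝ)) k, ← Real.rpow_mul hs0.le]
          ring_nf
        have hmul : s ^ D * s ^ ((k:ℝ)/2) * s ^ (-D - 1/2) = s ^ r := by
          rw [← Real.rpow_add hs0, ← Real.rpow_add hs0, hr]
          ring_nf
        rw [mul_pow, mul_pow, hpow]
        rw [← hmul]
        ring
      -- integrability of the bound
      have hIb : IntegrableOn (fun s : ℝ => C₀ * (2*M)^k / (Nat.factorial k) * s ^ r)
          (Set.Ioc (0:ℝ) t) := by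
        have := (intervalIntegral.intervalIntegrable_rpow' (a := 0) (b := t) hr1)
        rw [intervalIntegrable_iff_integrableOn_Ioc_of_le ht0.le] at this
        exact this.const_mul _
      have htmem : t ∈ Set.Ioc (0:ℝ) T := ⟨ht0, htT⟩
      have hImono : (∫ s in Set.Ioc (0:ℝ) t, A k s * s ^ (-D - 1/2))
          ≤ ∫ s in Set.Ioc (0:ℝ) t, C₀ * (2*M)^k / (Nat.factorial k) * s ^ r := by
        exact setIntegral_mono_on (hint k t htmem) hIb measurableSet_Ioc hpt
      have hIval : (∫ s in Set.Ioc (0:ℝ) t, C₀ * (2*M)^k / (Nat.factorial k) * s ^ r)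
          = C₀ * (2*M)^k / (Nat.factorial k) * (t ^ (r+1) / (r+1)) := by
        rw [integral_const_mul, ← intervalIntegral.integral_of_le ht0.le,
          integral_rpow (Or.inl hr1)]
        rw [Real.zero_rpow (by linarith : r + 1 ≠ 0)]
        ring
      have hfin : A (k+1) t ≤ M * t ^ D *
          (C₀ * (2*M)^k / (Nat.factorial k) * (t ^ (r+1) / (r+1))) := by
        refine (hrec k t htmem).trans ?_
        apply mul_le_mul_of_nonneg_left _ (by positivity)
        rw [← hIval]; exact hImono
      refine hfin.trans (le_of_eq ?_)
      have hsqt : (Real.sqrt t) ^ (k+1) = t ^ (((k:ℝ)+1)/2) := by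
        have hsq : Real.sqrt t = t ^ (1/2 : ℝ) := Real.sqrt_eq_rpow t
        rw [hsq, ← Real.rpow_natCast (t ^ (1/2:ℝ)) (k+1), ← Real.rpow_mul ht0.le]
        push_cast
        ring_nf
      have hrp1 : r + 1 = ((k:ℝ)+1)/2 := by rw [hr]; ring
      have hfact : (Nat.factorial (k+1) : ℝ) = ((k:ℝ)+1) * (Nat.factorial k) := by
        push_cast [Nat.factorial_succ]; ring
      rw [mul_pow, mul_pow, hsqt, hrp1, hfact]
      have hk1 : ((k:ℝ)+1) ≠ 0 := by positivity
      have hfk : (Nat.factorial k : ℝ) ≠ 0 := by positivity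
      field_simp
      ring
  refine ⟨key, ?_⟩
  haveI : Nonempty (Set.Ioc (0:ℝ) T) := ⟨⟨T, ⟨hT, le_refl T⟩⟩⟩
  set c : ℕ → ℝ := fun k => C₀ * T ^ D * ((2 * M * Real.sqrt T) ^ k / (Nat.factorial k)) with hc
  have hsumc : Summable c := (Real.summable_pow_div_factorial _).mul_left _
  have hle : ∀ k : ℕ, ∀ t ∈ Set.Ioc (0:ℝ) T,
      A k t ≤ c k := by
    intro k t ht
    refine (key k t ht).trans ?_
    rw [hc]
    rw [div_eq_mul_inv, mul_assoc, ← div_eq_mul_inv]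
    have h1 : t ^ D ≤ T ^ D := Real.rpow_le_rpow ht.1.le ht.2 hD
    have h2 : (2 * M * Real.sqrt t) ^ k ≤ (2 * M * Real.sqrt T) ^ k := by
      apply pow_le_pow_left₀ (by positivity)
      have := Real.sqrt_le_sqrt ht.2
      nlinarith [Real.sqrt_nonneg t]
    have hf : (0:ℝ) < (Nat.factorial k : ℝ) := by positivity
    have h3 : (2 * M * Real.sqrt t) ^ k / (Nat.factorial k)
        ≤ (2 * M * Real.sqrt T) ^ k / (Nat.factorial k) := (div_le_div_iff_of_pos_right hf).mpr h2
    exact mul_le_mul (mul_le_mul_of_nonneg_left h1 hC₀) h3 (by positivity) (by positivity)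
  have hsup_le : ∀ k : ℕ, (⨆ t : Set.Ioc (0:ℝ) T, A k t) ≤ c k := by
    intro k
    exact ciSup_le (fun t => hle k t t.2)
  have hsup_nn : ∀ k : ℕ, 0 ≤ ⨆ t : Set.Ioc (0:ℝ) T, A k t := by
    intro k
    have hbdd : BddAbove (Set.range fun t : Set.Ioc (0:ℝ) T => A k t) :=
      ⟨c k, by rintro x ⟨t, rfl⟩; exact hle k t t.2⟩
    refine le_trans (hnonneg k T ⟨hT, le_refl T⟩) ?_
    exact le_ciSup hbdd ⟨T, ⟨hT, le_refl T⟩⟩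
  exact Summable.of_nonneg_of_le hsup_nn hsup_le hsumc
end

section
/- Let D ≥ 0 and N be real numbers with N > D, let C₂, M, T′ > 0, and let b_k : (0, T′] → ℝ for k ∈ ℕ be continuous nonnegative functions such that (i) for each k there is a constant B_k with b_k(t) ≤ B_k·t^{N+3/2} on (0,T′], (ii) b₀(t) ≤ C₂·t^{N+3/2} for all t ∈ (0,T′], and (iii) b_{k+1}(t) ≤ C₂·t^{N+3/2} + M·t^D·∫_0^t b_k(s)·s^{−D−1/2} ds for all k ∈ ℕ and t ∈ (0,T′]. Then for every C > C₂ there exists T ∈ (0,T′] such that b_k(t) ≤ C·t^{N+3/2} for every k ∈ ℕ and every t ∈ (0,T]. -/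
/-!
Induction on `k` with the candidate bound `b k t ≤ C t^(N+3/2)` on `(0, T]`. Inserting it into the
recursion, the integral contributes `M C t^(N+3/2) √t / (N - D + 2)`: the weight `s^(-D-1/2)` and the
prefactor `t^D` together cost only `t^(-1/2)` against the gain `t` of integration. Taking
`√T ≤ (C - C₂)(N - D + 2) / (M C)` makes this at most `(C - C₂) t^(N+3/2)`, which closes the induction.
-/

open MeasureTheory Set

theorem integral_Ioc_zero_rpow {r t : ℝ} (hr : -1 < r) (ht : 0 ≤ t) :
    ∫ s in Ioc 0 t, s ^ r = t ^ (r + 1) / (r + 1) := by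
  rw [← intervalIntegral.integral_of_le ht, integral_rpow (Or.inl hr),
    Real.zero_rpow (by linarith), sub_zero]

theorem setIntegral_Ioc_mul_rpow_le {f : ℝ → ℝ} {C p q t : ℝ} (hpq : -1 < p + q) (ht : 0 ≤ t)
    (hf₀ : ∀ s ∈ Ioc 0 t, 0 ≤ f s) (hf : ∀ s ∈ Ioc 0 t, f s ≤ C * s ^ p) :
    ∫ s in Ioc 0 t, f s * s ^ q ≤ C * (t ^ (p + q + 1) / (p + q + 1)) := by
  have hle : ∀ s ∈ Ioc 0 t, f s * s ^ q ≤ C * s ^ (p + q) := fun s hs => by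
    rw [Real.rpow_add hs.1, ← mul_assoc]
    exact mul_le_mul_of_nonneg_right (hf s hs) (Real.rpow_nonneg hs.1.le q)
  calc ∫ s in Ioc 0 t, f s * s ^ q ≤ ∫ s in Ioc 0 t, C * s ^ (p + q) :=
        integral_mono_of_nonneg
          (ae_restrict_of_forall_mem measurableSet_Ioc fun s hs =>
            mul_nonneg (hf₀ s hs) (Real.rpow_nonneg hs.1.le q))
          ((intervalIntegral.intervalIntegrable_rpow' hpq).1.const_mul C)
          (ae_restrict_of_forall_mem measurableSet_Ioc hle)
    _ = C * (t ^ (p + q + 1) / (p + q + 1)) := by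
        rw [integral_const_mul, integral_Ioc_zero_rpow hpq ht]

theorem rpow_mul_setIntegral_Ioc_le {f : ℝ → ℝ} {C D N t : ℝ} (hND : D < N) (ht : 0 < t)
    (hf₀ : ∀ s ∈ Ioc 0 t, 0 ≤ f s) (hf : ∀ s ∈ Ioc 0 t, f s ≤ C * s ^ (N + 3 / 2)) :
    t ^ D * ∫ s in Ioc 0 t, f s * s ^ (-D - 1 / 2) ≤ C / (N - D + 2) * √t * t ^ (N + 3 / 2) :=
  calc t ^ D * ∫ s in Ioc 0 t, f s * s ^ (-D - 1 / 2)
      ≤ t ^ D * (C * (t ^ (N + 3 / 2 + (-D - 1 / 2) + 1) / (N + 3 / 2 + (-D - 1 / 2) + 1))) :=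
        mul_le_mul_of_nonneg_left (setIntegral_Ioc_mul_rpow_le (by linarith) ht.le hf₀ hf)
          (Real.rpow_nonneg ht.le D)
    _ = C / (N - D + 2) * √t * t ^ (N + 3 / 2) := by
        have hpow : t ^ D * t ^ (N - D + 2) = √t * t ^ (N + 3 / 2) := by
          rw [Real.sqrt_eq_rpow, ← Real.rpow_add ht, ← Real.rpow_add ht]
          ring_nf
        rw [show N + 3 / 2 + (-D - 1 / 2) + 1 = N - D + 2 by ring]
        linear_combination C / (N - D + 2) * hpow

theorem stmt12_general (D N C₂ M T' : ℝ) (hND : D < N)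
    (hC₂ : 0 < C₂) (hM : 0 < M) (hT' : 0 < T')
    (b : ℕ → ℝ → ℝ)
    (hnonneg : ∀ k : ℕ, ∀ t ∈ Set.Ioc (0:ℝ) T', 0 ≤ b k t)
    (h0 : ∀ t ∈ Set.Ioc (0:ℝ) T', b 0 t ≤ C₂ * t ^ (N + 3/2))
    (hrec : ∀ k : ℕ, ∀ t ∈ Set.Ioc (0:ℝ) T',
      b (k + 1) t ≤ C₂ * t ^ (N + 3/2)
        + M * t ^ D * ∫ s in Set.Ioc (0:ℝ) t, b k s * s ^ (-D - 1/2)) :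
    ∀ C : ℝ, C₂ < C → ∃ T : ℝ, 0 < T ∧ T ≤ T' ∧
      ∀ k : ℕ, ∀ t ∈ Set.Ioc (0:ℝ) T, b k t ≤ C * t ^ (N + 3/2) := by
  intro C hC
  have hC0 : 0 < C := hC₂.trans hC
  have he : 0 < N - D + 2 := by linarith
  set K := (C - C₂) * (N - D + 2) / (M * C)
  have hK : 0 < K := div_pos (mul_pos (sub_pos.2 hC) he) (mul_pos hM hC0)
  refine ⟨min T' (K ^ 2), lt_min hT' (by positivity), min_le_left _ _, fun k => ?_⟩
  have hsub : Ioc 0 (min T' (K ^ 2)) ⊆ Ioc 0 T' := Ioc_subset_Ioc_right (min_le_left _ _)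
  induction k with
  | zero =>
    intro t ht
    have ht0 : 0 < t := ht.1
    exact (h0 t (hsub ht)).trans (by gcongr)
  | succ k ih =>
    intro t ht
    have ht0 : 0 < t := ht.1
    have hsqrt : √t ≤ K := (Real.sqrt_le_left hK.le).2 (ht.2.trans (min_le_right _ _))
    have hint := rpow_mul_setIntegral_Ioc_le hND ht0
      (fun s hs => hnonneg k s (hsub ⟨hs.1, hs.2.trans ht.2⟩))
      (fun s hs => ih s ⟨hs.1, hs.2.trans ht.2⟩)
    calc b (k + 1) t
        ≤ C₂ * t ^ (N + 3 / 2) + M * (t ^ D * ∫ s in Ioc 0 t, b k s * s ^ (-D - 1 / 2)) := by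
          rw [← mul_assoc]; exact hrec k t (hsub ht)
      _ ≤ C₂ * t ^ (N + 3 / 2) + M * (C / (N - D + 2) * K * t ^ (N + 3 / 2)) := by
          gcongr C₂ * t ^ (N + 3 / 2) + M * ?_
          exact hint.trans (by gcongr)
      _ = C * t ^ (N + 3 / 2) := by
          simp only [K]; field_simp; ring

/-- Absorption lemma for the Picard iterates (analytic core of Lemma 7.5):
choosing the final time small enough yields a bound uniform in `k`. -/
theorem stmt12 (D N C₂ M T' : ℝ) (hD : 0 ≤ D) (hND : D < N)
    (hC₂ : 0 < C₂) (hM : 0 < M) (hT' : 0 < T')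
    (b : ℕ → ℝ → ℝ)
    (hcont : ∀ k : ℕ, ContinuousOn (b k) (Set.Ioc 0 T'))
    (hnonneg : ∀ k : ℕ, ∀ t ∈ Set.Ioc (0:ℝ) T', 0 ≤ b k t)
    (hbound : ∀ k : ℕ, ∃ B : ℝ, ∀ t ∈ Set.Ioc (0:ℝ) T', b k t ≤ B * t ^ (N + 3/2))
    (h0 : ∀ t ∈ Set.Ioc (0:ℝ) T', b 0 t ≤ C₂ * t ^ (N + 3/2))
    (hrec : ∀ k : ℕ, ∀ t ∈ Set.Ioc (0:ℝ) T',
      b (k + 1) t ≤ C₂ * t ^ (N + 3/2)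
        + M * t ^ D * ∫ s in Set.Ioc (0:ℝ) t, b k s * s ^ (-D - 1/2)) :
    ∀ C : ℝ, C₂ < C → ∃ T : ℝ, 0 < T ∧ T ≤ T' ∧
      ∀ k : ℕ, ∀ t ∈ Set.Ioc (0:ℝ) T, b k t ≤ C * t ^ (N + 3/2) :=
  stmt12_general D N C₂ M T' hND hC₂ hM hT' b hnonneg h0 hrec
end

section
/- Let g : ℝ → ℝ be continuous and 2π-periodic, and let v : ℝ → ℝ be differentiable and 2π-periodic with −2·v′(x) + v(x) + g(x) = 0 for all x ∈ ℝ. Then v(x) = −∫_{−∞}^0 e^s · g(x − 2s) ds for every x ∈ ℝ. -/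
/-!
Along the line `s ↦ x - 2 s` the function `φ s = exp s * v (x - 2 s)` has derivative
`exp s * (v - 2 v') (x - 2 s) = -exp s * g (x - 2 s)` by the equation. Continuity and periodicity
make `v` and `g` bounded, so this derivative is integrable on `(-∞, 0]` and `φ → 0` at `-∞`;
the fundamental theorem of calculus on `(-∞, 0]` then gives `-∫ = φ 0 - 0 = v x`.
-/

open MeasureTheory Filter Topology Set Real

theorem Function.Periodic.exists_forall_norm_le {E : Type*} [SeminormedAddCommGroup E]
    {f : ℝ → E} {c : ℝ} (hp : Function.Periodic f c) (hc : c ≠ 0) (hf : Continuous f) :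
    ∃ C, ∀ y, ‖f y‖ ≤ C := by
  obtain ⟨C, hC⟩ := isBounded_iff_forall_norm_le.mp (hp.isBounded_of_continuous hc hf)
  exact ⟨C, fun y => hC _ (mem_range_self y)⟩

section ExpWeight

variable {h : ℝ → ℝ} {C : ℝ}

theorem integrableOn_Iic_exp_mul_of_norm_le (hm : AEStronglyMeasurable h) (hC : ∀ s, ‖h s‖ ≤ C)
    (a : ℝ) :
    IntegrableOn (fun s => exp s * h s) (Iic a) :=
  (integrableOn_exp_Iic a).mul_bdd hm.restrict (ae_of_all _ hC)

theorem tendsto_exp_mul_atBot_zero_of_norm_le (hC : ∀ s, ‖h s‖ ≤ C) :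
    Tendsto (fun s => exp s * h s) atBot (𝓝 0) :=
  tendsto_exp_atBot.zero_mul_isBoundedUnder_le ⟨C, eventually_map.mpr (Eventually.of_forall hC)⟩

end ExpWeight

theorem hasDerivAt_exp_mul_comp_sub_two_mul {v : ℝ → ℝ} (hv : Differentiable ℝ v) (x s : ℝ) :
    HasDerivAt (fun s => exp s * v (x - 2 * s))
      (exp s * (v (x - 2 * s) - 2 * deriv v (x - 2 * s))) s := by
  have hcomp : HasDerivAt (fun s => v (x - 2 * s)) (deriv v (x - 2 * s) * -2) s :=
    (hv (x - 2 * s)).hasDerivAt.comp s (((hasDerivAt_id s).const_mul 2).const_sub x |>.congr_deriv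
      (by ring))
  exact ((hasDerivAt_exp s).fun_mul hcomp).congr_deriv (by ring)

/-- Representation formula from Remark 2.2: the unique `2π`-periodic solution
of `−2v′ + v + g = 0` is given by integrating the data along the horizon
generators with exponential weight. -/
theorem stmt14 (g v : ℝ → ℝ)
    (hg : Continuous g) (hgp : Function.Periodic g (2 * Real.pi))
    (hv : Differentiable ℝ v) (hvp : Function.Periodic v (2 * Real.pi))
    (heq : ∀ x : ℝ, -2 * deriv v x + v x + g x = 0) :
    ∀ x : ℝ, v x = -∫ s in Set.Iic (0:ℝ), Real.exp s * g (x - 2 * s) := by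
  intro x
  obtain ⟨Cg, hCg⟩ := hgp.exists_forall_norm_le two_pi_pos.ne' hg
  obtain ⟨Cv, hCv⟩ := hvp.exists_forall_norm_le two_pi_pos.ne' hv.continuous
  have hderiv : ∀ s ∈ Iic (0 : ℝ),
      HasDerivAt (fun s => exp s * v (x - 2 * s)) (-(exp s * g (x - 2 * s))) s := by
    intro s _
    convert hasDerivAt_exp_mul_comp_sub_two_mul hv x s using 1
    linear_combination (-exp s) * heq (x - 2 * s)
  have hint : IntegrableOn (fun s => -(exp s * g (x - 2 * s))) (Iic 0) :=
    (integrableOn_Iic_exp_mul_of_norm_le (by fun_prop) (fun s => hCg (x - 2 * s)) 0).neg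
  have hftc := integral_Iic_of_hasDerivAt_of_tendsto' hderiv hint
    (tendsto_exp_mul_atBot_zero_of_norm_le fun s => hCv (x - 2 * s))
  rw [integral_neg] at hftc
  simp only [mul_zero, sub_zero, exp_zero, one_mul] at hftc
  linarith
end

section
/- Let u be a function, smooth on [0,∞)×ℝ (all partial derivatives exist and are continuous up to t = 0) and 2π-periodic in x, satisfying t·∂_t²u − 2·∂_x∂_t u + u = 0 at every point of [0,∞)×ℝ. Then ∫_0^{2π} u(0,x) dx = 0. In particular, for any smooth 2π-periodic initial datum u₀ with ∫_0^{2π} u₀(x) dx ≠ 0 there exists no such solution with u(0,·) = u₀. -/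
/-- Partial derivative in the first (time) variable. -/
noncomputable def pt (u : ℝ → ℝ → ℝ) : ℝ → ℝ → ℝ := fun t x => deriv (fun s => u s x) t

/-- Partial derivative in the second (space) variable. -/
noncomputable def px (u : ℝ → ℝ → ℝ) : ℝ → ℝ → ℝ := fun t x => deriv (fun y => u t y) x

/-- Smooth up to the boundary `t = 0`, modelled as the restriction of a smooth
function on `ℝ²`. -/
def Smooth2 (u : ℝ → ℝ → ℝ) : Prop := ContDiff ℝ (⊤ : ℕ∞) (fun p : ℝ × ℝ => u p.1 p.2)

/-- `2π`-periodicity in the second variable. -/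
def Periodic2 (u : ℝ → ℝ → ℝ) : Prop := ∀ t x : ℝ, u t (x + 2 * Real.pi) = u t x

/-- A solution of the non-admissible wave equation
`t·∂ₜ²u − 2·∂ₓ∂ₜu + u = 0` on `[0,∞)×ℝ`, `2π`-periodic in `x`. -/
def IsSol16 (u : ℝ → ℝ → ℝ) : Prop :=
  Smooth2 u ∧ Periodic2 u ∧
    ∀ t x : ℝ, 0 ≤ t → t * pt (pt u) t x - 2 * px (pt u) t x + u t x = 0

/-- Counterexample 2.4 (second part): any solution of the non-admissible wave
equation `t·∂ₜ²u − 2·∂ₓ∂ₜu + u = 0` on the Misner spacetime has horizon datum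
of vanishing mean; in particular, initial data with nonzero mean admit no
solution. -/
theorem stmt16 :
    (∀ u : ℝ → ℝ → ℝ, IsSol16 u → ∫ x in (0:ℝ)..(2 * Real.pi), u 0 x = 0) ∧
    (∀ u₀ : ℝ → ℝ, ContDiff ℝ (⊤ : ℕ∞) u₀ → Function.Periodic u₀ (2 * Real.pi) →
      (∫ x in (0:ℝ)..(2 * Real.pi), u₀ x) ≠ 0 →
      ¬ ∃ u : ℝ → ℝ → ℝ, IsSol16 u ∧ ∀ x : ℝ, u 0 x = u₀ x) := by
  have main : ∀ u : ℝ → ℝ → ℝ, IsSol16 u → ∫ x in (0:ℝ)..(2 * Real.pi), u 0 x = 0 := by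
    rintro u ⟨hs, hp, heq⟩
    set U : ℝ × ℝ → ℝ := fun p => u p.1 p.2 with hUdef
    have hU : ContDiff ℝ (⊤ : ℕ∞) U := hs
    -- pt u in terms of the full differential
    have hA : ∀ t x : ℝ, pt u t x = fderiv ℝ U (t, x) (1, 0) := by
      intro t x
      have h1 : HasDerivAt (fun s : ℝ => (s, x)) ((1 : ℝ), (0 : ℝ)) t :=
        HasDerivAt.prodMk (hasDerivAt_id t) (hasDerivAt_const t x)
      have h2 : HasDerivAt (fun s : ℝ => U (s, x)) (fderiv ℝ U (t, x) (1, 0)) t :=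
        (hU.differentiable (by simp : ((⊤ : ℕ∞) : WithTop ℕ∞) ≠ 0) (t, x)).hasFDerivAt.comp_hasDerivAt (f := fun s : ℝ => (s, x)) t h1
      exact h2.deriv
    set v : ℝ → ℝ := fun y => fderiv ℝ U (0, y) (1, 0) with hvdef
    have hv : ContDiff ℝ (⊤ : ℕ∞) v := by
      have h1 : ContDiff ℝ (⊤ : ℕ∞) (fun p : ℝ × ℝ => fderiv ℝ U p) := hU.fderiv_right (by simp)
      have h2 : ContDiff ℝ (⊤ : ℕ∞) (fun y : ℝ => ((0 : ℝ), y)) := contDiff_const.prodMk contDiff_id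
      exact (h1.comp h2).clm_apply contDiff_const
    have hptv : (fun y => pt u 0 y) = v := funext fun y => hA 0 y
    have hderiv : ∀ x, u 0 x = 2 * deriv v x := by
      intro x
      have h := heq 0 x le_rfl
      have hx : px (pt u) 0 x = deriv v x := by
        show deriv (fun y => pt u 0 y) x = deriv v x
        rw [hptv]
      rw [hx] at h
      linarith
    have hvper : v (2 * Real.pi) = v 0 := by
      rw [← congrFun hptv (2 * Real.pi), ← congrFun hptv 0]
      show deriv (fun s => u s (2 * Real.pi)) 0 = deriv (fun s => u s 0) 0
      congr 1
      funext s
      have := hp s 0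
      simpa using this
    have hcont : Continuous (deriv v) := hv.continuous_deriv (by simp)
    have hint : ∫ x in (0:ℝ)..(2 * Real.pi), deriv v x = v (2 * Real.pi) - v 0 :=
      intervalIntegral.integral_deriv_eq_sub
        (fun x _ => (hv.differentiable (by simp)).differentiableAt)
        (hcont.intervalIntegrable _ _)
    calc ∫ x in (0:ℝ)..(2 * Real.pi), u 0 x
        = ∫ x in (0:ℝ)..(2 * Real.pi), 2 * deriv v x :=
          intervalIntegral.integral_congr (fun x _ => hderiv x)
      _ = 2 * (v (2 * Real.pi) - v 0) := by
          rw [intervalIntegral.integral_const_mul, hint]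
      _ = 0 := by rw [hvper]; ring
  refine ⟨main, ?_⟩
  rintro u₀ - - hne ⟨u, hsol, hinit⟩
  apply hne
  have : (∫ x in (0:ℝ)..(2 * Real.pi), u₀ x) = ∫ x in (0:ℝ)..(2 * Real.pi), u 0 x :=
    intervalIntegral.integral_congr (fun x _ => (hinit x).symm)
  rw [this]
  exact main u hsol
end
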